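/- arXiv:1909.10776 — 2 statements merged into one kernel-verified Lean document; each statement's English description precedes it below -/
import Mathlib

section
/- Let λ, μ ∈ ℝ and let H : (Fin 3)⁶ → ℝ be a sixth-order tensor satisfying the symmetries H_{ijklmn} = H_{ikjlmn} = H_{ijklnm} = H_{lmnijk}. For every smooth, compactly supported u : ℝ³ → ℝ³ and every smooth, compactly supported ν̃ : ℝ³ → (Fin 3)³ → ℝ with ν̃(x) a symmetric triadic for every x, the following energy identity holds: ∫_{ℝ³} Σ_k u_k · [−(Δ*·u)_k + Σ_{i,j} ∂_i∂_j (H⫶ν̃)_{ijk}] dx + ∫_{ℝ³} Σ_{i,j,k} ν̃_{ijk} · [−(H⫶∇e(u))_{ijk} + (H⫶ν̃)_{ijk}] dx = ∫_{ℝ³} [2μ Σ_{j,k} e_{jk}(u)² + λ (div u)²] dx + ∫_{ℝ³} Σ ν̃_{ijk} H_{ijklmn} ν̃_{lmn} dx. -/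
open MeasureTheory

noncomputable section

/-- Points of `ℝ³`. -/
abbrev V : Type := Fin 3 → ℝ

/-- `i`-th partial derivative of a scalar field on `ℝ³`. -/
noncomputable def pd (i : Fin 3) (f : V → ℝ) : V → ℝ :=
  fun x => fderiv ℝ f x (Pi.single i 1)

/-- Divergence of a vector field. -/
noncomputable def divg (u : V → V) : V → ℝ :=
  fun x => ∑ j : Fin 3, pd j (fun y => u y j) x

/-- Componentwise Laplacian of a vector field. -/
noncomputable def vlap (u : V → V) (k : Fin 3) : V → ℝ :=
  fun x => ∑ j : Fin 3, pd j (pd j (fun y => u y k)) x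

/-- The strain tensor `e_{jk}(u) = ½(∂_j u_k + ∂_k u_j)`. -/
noncomputable def strain (u : V → V) (j k : Fin 3) : V → ℝ :=
  fun x => (1/2) * (pd j (fun y => u y k) x + pd k (fun y => u y j) x)

/-- The Lamé (Navier) operator `(Δ*·u)_k = μ (Δu)_k + (λ+μ) ∂_k (div u)`. -/
noncomputable def navier (lam mu : ℝ) (u : V → V) (k : Fin 3) : V → ℝ :=
  fun x => mu * vlap u k x + (lam + mu) * pd k (divg u) x

/-- The gradient of the strain, `(∇e(u))_{ijk} = ∂_i e_{jk}(u)`. -/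
noncomputable def gradStrain (u : V → V) (i j k : Fin 3) : V → ℝ :=
  pd i (strain u j k)

/-- Contraction of a sixth order tensor with a triadic:
`(H⫶κ)_{ijk} = Σ_{l,m,n} H_{ijklmn} κ_{lmn}`. -/
def Hcontr (H : Fin 3 → Fin 3 → Fin 3 → Fin 3 → Fin 3 → Fin 3 → ℝ)
    (κ : Fin 3 → Fin 3 → Fin 3 → ℝ) (i j k : Fin 3) : ℝ :=
  ∑ l : Fin 3, ∑ m : Fin 3, ∑ n : Fin 3, H i j k l m n * κ l m n

/-- A triadic is symmetric if it is symmetric in its last two indices. -/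
def SymTriadic (κ : Fin 3 → Fin 3 → Fin 3 → ℝ) : Prop :=
  ∀ i j k, κ i j k = κ i k j

/-- The symmetries `H_{ijklmn} = H_{ikjlmn} = H_{ijklnm} = H_{lmnijk}`. -/
def Hsym (H : Fin 3 → Fin 3 → Fin 3 → Fin 3 → Fin 3 → Fin 3 → ℝ) : Prop :=
  ∀ i j k l m n, H i j k l m n = H i k j l m n ∧
    H i j k l m n = H i j k l n m ∧ H i j k l m n = H l m n i j k

/-- Positivity of `H` with constant `α` on symmetric triadics. -/
def Hpos (H : Fin 3 → Fin 3 → Fin 3 → Fin 3 → Fin 3 → Fin 3 → ℝ) (α : ℝ) : Prop :=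
  ∀ κ : Fin 3 → Fin 3 → Fin 3 → ℝ, SymTriadic κ →
    α * (∑ i : Fin 3, ∑ j : Fin 3, ∑ k : Fin 3, (κ i j k)^2) ≤
      ∑ i : Fin 3, ∑ j : Fin 3, ∑ k : Fin 3, ∑ l : Fin 3, ∑ m : Fin 3, ∑ n : Fin 3,
        κ i j k * H i j k l m n * κ l m n

/-- The double stress tensor of Mindlin Form II gradient elasticity with constitutive
parameters `a₁,…,a₅`. -/
noncomputable def dstress (a1 a2 a3 a4 a5 : ℝ) (u : V → V) (i j k : Fin 3) : V → ℝ :=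
  fun x =>
    (1/2) * a1 * ((if j = k then (1:ℝ) else 0) * vlap u i x
      + (if i = j then (1:ℝ) else 0) * pd k (divg u) x
      + (if j = k then (1:ℝ) else 0) * pd i (divg u) x
      + (if i = k then (1:ℝ) else 0) * pd j (divg u) x)
    + 2 * a2 * (if j = k then (1:ℝ) else 0) * pd i (divg u) x
    + (1/2) * a3 * ((if i = j then (1:ℝ) else 0) * vlap u k x
      + (if i = j then (1:ℝ) else 0) * pd k (divg u) x
      + (if i = k then (1:ℝ) else 0) * vlap u j x
      + (if i = k then (1:ℝ) else 0) * pd j (divg u) x)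
    + a4 * (pd i (pd j (fun y => u y k)) x + pd i (pd k (fun y => u y j)) x)
    + (1/2) * a5 * (2 * pd j (pd k (fun y => u y i)) x
      + pd i (pd j (fun y => u y k)) x + pd i (pd k (fun y => u y j)) x)

/-! Integrating by parts, `∫ u · Δ*u = -∫ (μ |∇u|² + (λ + μ) (div u)²)`, and two further
integrations by parts give `∫ ∑ ∂_j u_k ∂_k u_j = ∫ (div u)²`; together with
`2 |e(u)|² = |∇u|² + ∑ ∂_j u_k ∂_k u_j` this yields `∫ u · Δ*u = -∫ (2μ |e(u)|² + λ (div u)²)`.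
Integrating by parts twice moves `∂_i ∂_j` from `H⫶ν̃` onto `u`, and the symmetries of `H` give
`∑ ∂_i ∂_j u_k (H⫶ν̃)_{ijk} = ∑ ν̃_{ijk} (H⫶∇e(u))_{ijk}` pointwise, so the coupling terms
cancel. -/

open Finset
open scoped ContDiff

section PartialDerivatives

variable {f g : V → ℝ} {x : V}

lemma pd_add (i : Fin 3) (hf : DifferentiableAt ℝ f x) (hg : DifferentiableAt ℝ g x) :
    pd i (fun y => f y + g y) x = pd i f x + pd i g x := by
  simp [pd, fderiv_fun_add hf hg]

lemma pd_const_mul (i : Fin 3) (c : ℝ) (hf : DifferentiableAt ℝ f x) :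
    pd i (fun y => c * f y) x = c * pd i f x := by
  simp [pd, fderiv_const_mul hf]

lemma pd_sum {ι : Type*} (s : Finset ι) {F : ι → V → ℝ} (i : Fin 3)
    (hF : ∀ j ∈ s, DifferentiableAt ℝ (F j) x) :
    pd i (fun y => ∑ j ∈ s, F j y) x = ∑ j ∈ s, pd i (F j) x := by
  simp [pd, fderiv_fun_sum hF]

lemma ContDiff.pd {n m : WithTop ℕ∞} (hf : ContDiff ℝ n f) (hmn : m + 1 ≤ n) (i : Fin 3) :
    ContDiff ℝ m (pd i f) :=
  (hf.fderiv_right hmn).clm_apply contDiff_const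

lemma pd_comm (i j : Fin 3) (hf : ContDiff ℝ 2 f) : pd i (pd j f) x = pd j (pd i f) x := by
  have hdf : DifferentiableAt ℝ (fderiv ℝ f) x :=
    (hf.fderiv_right (m := 1) le_rfl).differentiable one_ne_zero x
  have hsymm : IsSymmSndFDerivAt ℝ f x := hf.contDiffAt.isSymmSndFDerivAt (by simp)
  change fderiv ℝ (fun y => fderiv ℝ f y (Pi.single j 1)) x (Pi.single i 1)
    = fderiv ℝ (fun y => fderiv ℝ f y (Pi.single i 1)) x (Pi.single j 1)
  simpa [fderiv_clm_apply hdf (differentiableAt_const _)] using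
    hsymm (Pi.single i 1) (Pi.single j 1)

end PartialDerivatives

section TestFunctions

variable {E : Type*} [NormedAddCommGroup E] [NormedSpace ℝ E]

def IsTestFunction (f : E → ℝ) : Prop := ContDiff ℝ ∞ f ∧ HasCompactSupport f

namespace IsTestFunction

variable {f g : E → ℝ}

lemma add (hf : IsTestFunction f) (hg : IsTestFunction g) :
    IsTestFunction (fun x => f x + g x) :=
  ⟨hf.1.add hg.1, hf.2.add hg.2⟩

lemma mul (hf : IsTestFunction f) (hg : IsTestFunction g) :
    IsTestFunction (fun x => f x * g x) :=
  ⟨hf.1.mul hg.1, hf.2.mul_right⟩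

lemma const_mul (hf : IsTestFunction f) (c : ℝ) : IsTestFunction (fun x => c * f x) :=
  ⟨contDiff_const.mul hf.1, hf.2.mul_left⟩

lemma sum {ι : Type*} {s : Finset ι} {F : ι → E → ℝ} (hF : ∀ i ∈ s, IsTestFunction (F i)) :
    IsTestFunction (fun x => ∑ i ∈ s, F i x) := by
  classical
  induction s using Finset.induction_on with
  | empty => simpa using ⟨contDiff_const, HasCompactSupport.zero⟩
  | insert a s ha ih =>
    simp_rw [sum_insert ha]
    exact (hF a (mem_insert_self a s)).add (ih fun i hi => hF i (mem_insert_of_mem hi))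

lemma contDiff {n : ℕ∞} (hf : IsTestFunction f) : ContDiff ℝ n f :=
  hf.1.of_le (WithTop.coe_le_coe.mpr le_top)

lemma differentiable (hf : IsTestFunction f) : Differentiable ℝ f :=
  hf.1.differentiable (by simp)

lemma integrable [MeasurableSpace E] [OpensMeasurableSpace E] {μ : Measure E}
    [IsFiniteMeasureOnCompacts μ] (hf : IsTestFunction f) : Integrable f μ :=
  hf.1.continuous.integrable_of_hasCompactSupport hf.2

lemma pd {f : V → ℝ} (hf : IsTestFunction f) (i : Fin 3) : IsTestFunction (pd i f) :=
  ⟨hf.1.pd (by simp) i, hf.2.fderiv_apply (𝕜 := ℝ) (Pi.single i 1)⟩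

end IsTestFunction

end TestFunctions

section IntegrationByParts

variable {f g : V → ℝ}

lemma integral_mul_pd (i : Fin 3) (hf : IsTestFunction f) (hg : IsTestFunction g) :
    ∫ x, f x * pd i g x = -∫ x, pd i f x * g x :=
  integral_mul_fderiv_eq_neg_fderiv_mul_of_integrable ((hf.pd i).mul hg).integrable
    (hf.mul (hg.pd i)).integrable (hf.mul hg).integrable
    (fun x _ => hf.differentiable x) (fun x _ => hg.differentiable x)

lemma integral_mul_pd_pd (i j : Fin 3) (hf : IsTestFunction f) (hg : IsTestFunction g) :
    ∫ x, f x * pd i (pd j g) x = ∫ x, pd j (pd i f) x * g x := by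
  rw [integral_mul_pd i hf (hg.pd j), integral_mul_pd j (hf.pd i) hg, neg_neg]

end IntegrationByParts

lemma integral_finset_sum_congr {α ι : Type*} [MeasurableSpace α] {μ : Measure α}
    {s : Finset ι} {F G : ι → α → ℝ} (hF : ∀ i ∈ s, Integrable (F i) μ)
    (hG : ∀ i ∈ s, Integrable (G i) μ) (h : ∀ i ∈ s, ∫ x, F i x ∂μ = ∫ x, G i x ∂μ) :
    ∫ x, ∑ i ∈ s, F i x ∂μ = ∫ x, ∑ i ∈ s, G i x ∂μ := by
  rw [integral_finsetSum s hF, integral_finsetSum s hG]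
  exact sum_congr rfl h

lemma integral_sum_sum_congr {α ι κ : Type*} [MeasurableSpace α] {μ : Measure α} [Fintype ι]
    [Fintype κ] {F G : ι → κ → α → ℝ} (hF : ∀ a b, Integrable (F a b) μ)
    (hG : ∀ a b, Integrable (G a b) μ) (h : ∀ a b, ∫ x, F a b x ∂μ = ∫ x, G a b x ∂μ) :
    ∫ x, ∑ a, ∑ b, F a b x ∂μ = ∫ x, ∑ a, ∑ b, G a b x ∂μ :=
  integral_finset_sum_congr (fun a _ => integrable_finsetSum _ fun b _ => hF a b)
    (fun a _ => integrable_finsetSum _ fun b _ => hG a b)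
    fun a _ => integral_finset_sum_congr (fun b _ => hF a b) (fun b _ => hG a b) fun b _ => h a b

lemma sum_sum_sum_comm_sum_sum_sum {ι M : Type*} [Fintype ι] [AddCommMonoid M]
    (f : ι → ι → ι → ι → ι → ι → M) :
    ∑ a, ∑ b, ∑ c, ∑ a', ∑ b', ∑ c', f a b c a' b' c'
      = ∑ a', ∑ b', ∑ c', ∑ a, ∑ b, ∑ c, f a b c a' b' c' := by
  have h3 (g : ι → ι → ι → M) : ∑ a, ∑ b, ∑ c, g a b c = ∑ p : ι × ι × ι, g p.1 p.2.1 p.2.2 := by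
    simp only [Fintype.sum_prod_type]
  simp only [h3]
  exact Finset.sum_comm

lemma sum_half_add_swap_mul {ι : Type*} [Fintype ι] (A W : ι → ι → ι → ℝ)
    (hW : ∀ i j k, W i j k = W i k j) :
    ∑ i, ∑ j, ∑ k, 1 / 2 * (A i j k + A i k j) * W i j k = ∑ i, ∑ j, ∑ k, A i j k * W i j k := by
  have hswap : ∑ i, ∑ j, ∑ k, A i k j * W i j k = ∑ i, ∑ j, ∑ k, A i j k * W i j k :=
    sum_congr rfl fun i _ => by rw [sum_comm]; simp only [hW i]
  simp only [mul_add, add_mul, sum_add_distrib, mul_assoc, ← mul_sum, hswap]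
  ring

lemma two_mul_sum_sq_half_add_swap {ι : Type*} [Fintype ι] (A : ι → ι → ℝ) :
    2 * ∑ j, ∑ k, (1 / 2 * (A j k + A k j)) ^ 2
      = ∑ j, ∑ k, A j k * A j k + ∑ j, ∑ k, A j k * A k j := by
  have hswap : ∑ j, ∑ k, A k j * A k j = ∑ j, ∑ k, A j k * A j k := sum_comm
  calc 2 * ∑ j, ∑ k, (1 / 2 * (A j k + A k j)) ^ 2
      = ∑ j, ∑ k, (1 / 2 * (A j k * A j k) + A j k * A k j + 1 / 2 * (A k j * A k j)) := by
        simp only [mul_sum]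
        exact sum_congr rfl fun j _ => sum_congr rfl fun k _ => by ring
    _ = _ := by
        simp only [sum_add_distrib, ← mul_sum, hswap]
        ring

section Triadics

variable (H : Fin 3 → Fin 3 → Fin 3 → Fin 3 → Fin 3 → Fin 3 → ℝ)

lemma sum_mul_Hcontr (κ τ : Fin 3 → Fin 3 → Fin 3 → ℝ) :
    ∑ i, ∑ j, ∑ k, κ i j k * Hcontr H τ i j k
      = ∑ i, ∑ j, ∑ k, ∑ l, ∑ m, ∑ n, κ i j k * H i j k l m n * τ l m n := by
  simp only [Hcontr, mul_sum, mul_assoc]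

lemma sum_mul_Hcontr_comm (hH : ∀ i j k l m n, H i j k l m n = H l m n i j k)
    (κ τ : Fin 3 → Fin 3 → Fin 3 → ℝ) :
    ∑ i, ∑ j, ∑ k, κ i j k * Hcontr H τ i j k = ∑ i, ∑ j, ∑ k, τ i j k * Hcontr H κ i j k := by
  rw [sum_mul_Hcontr, sum_mul_Hcontr, sum_sum_sum_comm_sum_sum_sum]
  refine sum_congr rfl fun l _ => sum_congr rfl fun m _ => sum_congr rfl fun n _ =>
    sum_congr rfl fun i _ => sum_congr rfl fun j _ => sum_congr rfl fun k _ => ?_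
  rw [hH]
  ring

lemma symTriadic_Hcontr (hH : ∀ i j k l m n, H i j k l m n = H i k j l m n)
    (κ : Fin 3 → Fin 3 → Fin 3 → ℝ) : SymTriadic (Hcontr H κ) := fun i j k => by
  simp only [Hcontr, hH i j k]

end Triadics

section Elasticity

variable {u : V → V}

lemma isTestFunction_divg (hu : ∀ k, IsTestFunction (fun y => u y k)) :
    IsTestFunction (divg u) :=
  IsTestFunction.sum fun j _ => (hu j).pd j

lemma isTestFunction_vlap (hu : ∀ k, IsTestFunction (fun y => u y k)) (k : Fin 3) :
    IsTestFunction (vlap u k) :=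
  .sum fun j _ => ((hu k).pd j).pd j

lemma isTestFunction_navier (lam mu : ℝ) (hu : ∀ k, IsTestFunction (fun y => u y k))
    (k : Fin 3) : IsTestFunction (navier lam mu u k) :=
  ((isTestFunction_vlap hu k).const_mul mu).add (((isTestFunction_divg hu).pd k).const_mul _)

lemma pd_divg (hu : ∀ k, ContDiff ℝ 2 (fun y => u y k)) (j : Fin 3) (x : V) :
    pd j (divg u) x = ∑ k, pd k (pd j (fun y => u y k)) x := by
  unfold divg
  rw [pd_sum _ j fun k _ => ((hu k).pd (m := 1) le_rfl k).differentiable one_ne_zero x]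
  exact sum_congr rfl fun k _ => pd_comm j k (hu k)

lemma integral_mul_vlap (hu : ∀ k, IsTestFunction (fun y => u y k)) :
    ∫ x, ∑ k, u x k * vlap u k x
      = -∫ x, ∑ j, ∑ k, pd j (fun y => u y k) x * pd j (fun y => u y k) x := by
  calc ∫ x, ∑ k, u x k * vlap u k x
      = ∫ x, ∑ k, ∑ j, u x k * pd j (pd j (fun y => u y k)) x := by simp only [vlap, mul_sum]
    _ = ∫ x, ∑ k, ∑ j, -(pd j (fun y => u y k) x * pd j (fun y => u y k) x) :=
      integral_sum_sum_congr (fun k j => ((hu k).mul (((hu k).pd j).pd j)).integrable)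
        (fun k j => (((hu k).pd j).mul ((hu k).pd j)).integrable.neg)
        fun k j => by rw [integral_mul_pd j (hu k) ((hu k).pd j), integral_neg]
    _ = _ := by
      rw [← integral_neg]
      congr 1 with x
      rw [sum_comm]
      simp only [sum_neg_distrib]

lemma integral_mul_pd_divg (hu : ∀ k, IsTestFunction (fun y => u y k)) :
    ∫ x, ∑ k, u x k * pd k (divg u) x = -∫ x, divg u x * divg u x := by
  have hdiv := isTestFunction_divg hu
  calc ∫ x, ∑ k, u x k * pd k (divg u) x
      = ∫ x, ∑ k, -(pd k (fun y => u y k) x * divg u x) :=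
      integral_finset_sum_congr (fun k _ => ((hu k).mul (hdiv.pd k)).integrable)
        (fun k _ => (((hu k).pd k).mul hdiv).integrable.neg)
        fun k _ => by rw [integral_mul_pd k (hu k) hdiv, integral_neg]
    _ = _ := by rw [← integral_neg]; simp only [sum_neg_distrib, ← sum_mul]; rfl

lemma integral_sum_pd_mul_pd_swap (hu : ∀ k, IsTestFunction (fun y => u y k)) :
    ∫ x, ∑ j, ∑ k, pd j (fun y => u y k) x * pd k (fun y => u y j) x
      = ∫ x, divg u x * divg u x := by
  calc ∫ x, ∑ j, ∑ k, pd j (fun y => u y k) x * pd k (fun y => u y j) x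
      = ∫ x, ∑ j, ∑ k, -(pd k (pd j (fun y => u y k)) x * u x j) :=
      integral_sum_sum_congr (fun j k => (((hu k).pd j).mul ((hu j).pd k)).integrable)
        (fun j k => ((((hu k).pd j).pd k).mul (hu j)).integrable.neg)
        fun j k => by rw [integral_mul_pd k ((hu k).pd j) (hu j), integral_neg]
    _ = -∫ x, ∑ j, u x j * pd j (divg u) x := by
      rw [← integral_neg]
      congr 1 with x
      have hu2 : ∀ k, ContDiff ℝ 2 (fun y => u y k) := fun k => (hu k).contDiff
      simp only [pd_divg hu2, sum_mul, sum_neg_distrib, mul_comm (u x _)]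
    _ = _ := by rw [integral_mul_pd_divg hu, neg_neg]

lemma integral_mul_navier_eq (lam mu : ℝ) (hu : ∀ k, IsTestFunction (fun y => u y k)) :
    ∫ x, ∑ k, u x k * navier lam mu u k x
      = mu * (∫ x, ∑ k, u x k * vlap u k x) + (lam + mu) * ∫ x, ∑ k, u x k * pd k (divg u) x :=
  calc ∫ x, ∑ k, u x k * navier lam mu u k x
      = ∫ x, (mu * ∑ k, u x k * vlap u k x + (lam + mu) * ∑ k, u x k * pd k (divg u) x) := by
        congr 1 with x
        simp only [navier, mul_sum, ← sum_add_distrib]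
        exact sum_congr rfl fun k _ => by ring
    _ = _ := by
        rw [integral_add
          ((IsTestFunction.sum fun k _ => (hu k).mul (isTestFunction_vlap hu k)).const_mul
            mu).integrable
          ((IsTestFunction.sum fun k _ =>
            (hu k).mul ((isTestFunction_divg hu).pd k)).const_mul _).integrable,
          integral_const_mul, integral_const_mul]

lemma integral_strain_energy_eq (lam mu : ℝ) (hu : ∀ k, IsTestFunction (fun y => u y k)) :
    ∫ x, (2 * mu * ∑ j, ∑ k, strain u j k x ^ 2 + lam * divg u x ^ 2)
      = mu * ((∫ x, ∑ j, ∑ k, pd j (fun y => u y k) x * pd j (fun y => u y k) x)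
          + ∫ x, ∑ j, ∑ k, pd j (fun y => u y k) x * pd k (fun y => u y j) x)
        + lam * ∫ x, divg u x * divg u x := by
  have hdiv := isTestFunction_divg hu
  have hgrad_sq : IsTestFunction fun x =>
      ∑ j, ∑ k, pd j (fun y => u y k) x * pd j (fun y => u y k) x :=
    .sum fun j _ => .sum fun k _ => ((hu k).pd j).mul ((hu k).pd j)
  have hgrad_swap : IsTestFunction fun x =>
      ∑ j, ∑ k, pd j (fun y => u y k) x * pd k (fun y => u y j) x :=
    .sum fun j _ => .sum fun k _ => ((hu k).pd j).mul ((hu j).pd k)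
  have hstrain : ∀ x, 2 * ∑ j, ∑ k, strain u j k x ^ 2
      = ∑ j, ∑ k, pd j (fun y => u y k) x * pd j (fun y => u y k) x
        + ∑ j, ∑ k, pd j (fun y => u y k) x * pd k (fun y => u y j) x :=
    fun x => two_mul_sum_sq_half_add_swap _
  calc ∫ x, (2 * mu * ∑ j, ∑ k, strain u j k x ^ 2 + lam * divg u x ^ 2)
      = ∫ x, (mu * ((∑ j, ∑ k, pd j (fun y => u y k) x * pd j (fun y => u y k) x)
          + ∑ j, ∑ k, pd j (fun y => u y k) x * pd k (fun y => u y j) x)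
          + lam * (divg u x * divg u x)) := by
        congr 1 with x
        rw [mul_comm 2, mul_assoc, hstrain]
        ring
    _ = _ := by
        rw [integral_add ((hgrad_sq.add hgrad_swap).const_mul mu).integrable
          ((hdiv.mul hdiv).const_mul lam).integrable, integral_const_mul, integral_const_mul,
          integral_add hgrad_sq.integrable hgrad_swap.integrable]

lemma integral_mul_navier (lam mu : ℝ) (hu : ∀ k, IsTestFunction (fun y => u y k)) :
    ∫ x, ∑ k, u x k * navier lam mu u k x
      = -∫ x, (2 * mu * ∑ j, ∑ k, strain u j k x ^ 2 + lam * divg u x ^ 2) := by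
  rw [integral_mul_navier_eq lam mu hu, integral_strain_energy_eq lam mu hu,
    integral_mul_vlap hu, integral_mul_pd_divg hu, integral_sum_pd_mul_pd_swap hu]
  ring

end Elasticity

section StrainGradient

variable (H : Fin 3 → Fin 3 → Fin 3 → Fin 3 → Fin 3 → Fin 3 → ℝ) {u : V → V}
  {ν : V → Fin 3 → Fin 3 → Fin 3 → ℝ}

lemma gradStrain_eq (hu : ∀ k, ContDiff ℝ 2 (fun y => u y k)) (i j k : Fin 3) (x : V) :
    gradStrain u i j k x
      = 1 / 2 * (pd i (pd j (fun y => u y k)) x + pd i (pd k (fun y => u y j)) x) := by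
  have hd : ∀ a b, DifferentiableAt ℝ (pd a (fun y => u y b)) x := fun a b =>
    ((hu b).pd (m := 1) le_rfl a).differentiable one_ne_zero x
  unfold gradStrain strain
  rw [pd_const_mul i _ ((hd j k).fun_add (hd k j)), pd_add i (hd j k) (hd k j)]

lemma sum_mul_Hcontr_gradStrain (hmaj : ∀ i j k l m n, H i j k l m n = H l m n i j k)
    (hmin : ∀ i j k l m n, H i j k l m n = H i k j l m n)
    (hu : ∀ k, ContDiff ℝ 2 (fun y => u y k)) (κ : Fin 3 → Fin 3 → Fin 3 → ℝ) (x : V) :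
    ∑ i, ∑ j, ∑ k, κ i j k * Hcontr H (fun l m n => gradStrain u l m n x) i j k
      = ∑ i, ∑ j, ∑ k, pd i (pd j (fun y => u y k)) x * Hcontr H κ i j k := by
  rw [sum_mul_Hcontr_comm H hmaj]
  simp only [gradStrain_eq hu]
  exact sum_half_add_swap_mul _ _ (symTriadic_Hcontr H hmin κ)

lemma isTestFunction_Hcontr (hν : ∀ i j k, IsTestFunction (fun y => ν y i j k)) (i j k : Fin 3) :
    IsTestFunction (fun y => Hcontr H (ν y) i j k) :=
  .sum fun l _ => .sum fun m _ => .sum fun n _ => (hν l m n).const_mul _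

lemma integral_mul_pd_pd_Hcontr (hu : ∀ k, IsTestFunction (fun y => u y k))
    (hν : ∀ i j k, IsTestFunction (fun y => ν y i j k)) :
    ∫ x, ∑ k, u x k * ∑ i, ∑ j, pd i (pd j (fun y => Hcontr H (ν y) i j k)) x
      = ∫ x, ∑ i, ∑ j, ∑ k, pd i (pd j (fun y => u y k)) x * Hcontr H (ν x) i j k := by
  have hW := isTestFunction_Hcontr H hν
  calc ∫ x, ∑ k, u x k * ∑ i, ∑ j, pd i (pd j (fun y => Hcontr H (ν y) i j k)) x
      = ∫ x, ∑ k, ∑ i, ∑ j, pd j (pd i (fun y => u y k)) x * Hcontr H (ν x) i j k := by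
        simp only [mul_sum]
        exact integral_finset_sum_congr
          (fun k _ => (IsTestFunction.sum fun i _ => .sum fun j _ =>
            (hu k).mul (((hW i j k).pd j).pd i)).integrable)
          (fun k _ => (IsTestFunction.sum fun i _ => .sum fun j _ =>
            (((hu k).pd i).pd j).mul (hW i j k)).integrable)
          fun k _ => integral_sum_sum_congr
            (fun i j => ((hu k).mul (((hW i j k).pd j).pd i)).integrable)
            (fun i j => ((((hu k).pd i).pd j).mul (hW i j k)).integrable)
            fun i j => integral_mul_pd_pd i j (hu k) (hW i j k)
    _ = _ := by
        congr 1 with x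
        rw [sum_comm]
        refine sum_congr rfl fun i _ => ?_
        rw [sum_comm]
        exact sum_congr rfl fun j _ => sum_congr rfl fun k _ => by
          rw [pd_comm j i (hu k).contDiff]

end StrainGradient

theorem energy_identity_general
    (lam mu : ℝ) (H : Fin 3 → Fin 3 → Fin 3 → Fin 3 → Fin 3 → Fin 3 → ℝ) (hH : Hsym H)
    (u : V → V) (ν : V → Fin 3 → Fin 3 → Fin 3 → ℝ)
    (hu : ContDiff ℝ (⊤ : ℕ∞) u) (hν : ContDiff ℝ (⊤ : ℕ∞) ν)
    (huc : HasCompactSupport u) (hνc : HasCompactSupport ν) :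
    (∫ x : V, ∑ k : Fin 3, u x k *
        (-(navier lam mu u k x)
          + ∑ i : Fin 3, ∑ j : Fin 3, pd i (pd j (fun y => Hcontr H (ν y) i j k)) x))
    + (∫ x : V, ∑ i : Fin 3, ∑ j : Fin 3, ∑ k : Fin 3, ν x i j k *
        (-(Hcontr H (fun l m n => gradStrain u l m n x) i j k) + Hcontr H (ν x) i j k))
    = (∫ x : V, (2 * mu * ∑ j : Fin 3, ∑ k : Fin 3, (strain u j k x)^2
          + lam * (divg u x)^2))
      + (∫ x : V, ∑ i : Fin 3, ∑ j : Fin 3, ∑ k : Fin 3, ∑ l : Fin 3, ∑ m : Fin 3, ∑ n : Fin 3,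
          ν x i j k * H i j k l m n * ν x l m n) := by
  have hu' : ∀ k, IsTestFunction (fun y => u y k) := fun k =>
    ⟨contDiff_pi.mp hu k, huc.comp_left (g := fun v : V => v k) rfl⟩
  have hν' : ∀ i j k, IsTestFunction (fun y => ν y i j k) := fun i j k =>
    ⟨contDiff_pi.mp (contDiff_pi.mp (contDiff_pi.mp hν i) j) k,
      hνc.comp_left (g := fun t : Fin 3 → Fin 3 → Fin 3 → ℝ => t i j k) rfl⟩
  have hmaj : ∀ i j k l m n, H i j k l m n = H l m n i j k := fun _ _ _ _ _ _ => (hH ..).2.2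
  have hmin : ∀ i j k l m n, H i j k l m n = H i k j l m n := fun _ _ _ _ _ _ => (hH ..).1
  have hW := isTestFunction_Hcontr H hν'
  have hA : IsTestFunction fun x => ∑ k, u x k * navier lam mu u k x :=
    .sum fun k _ => (hu' k).mul (isTestFunction_navier lam mu hu' k)
  have hB : IsTestFunction fun x =>
      ∑ k, u x k * ∑ i, ∑ j, pd i (pd j (fun y => Hcontr H (ν y) i j k)) x :=
    .sum fun k _ => (hu' k).mul (.sum fun i _ => .sum fun j _ => ((hW i j k).pd j).pd i)
  have hC : IsTestFunction fun x =>
      ∑ i, ∑ j, ∑ k, pd i (pd j (fun y => u y k)) x * Hcontr H (ν x) i j k :=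
    .sum fun i _ => .sum fun j _ => .sum fun k _ => (((hu' k).pd j).pd i).mul (hW i j k)
  have hD : IsTestFunction fun x => ∑ i, ∑ j, ∑ k, ν x i j k * Hcontr H (ν x) i j k :=
    .sum fun i _ => .sum fun j _ => .sum fun k _ => (hν' i j k).mul (hW i j k)
  simp only [mul_add, mul_neg, sum_add_distrib, sum_neg_distrib, ← sum_mul_Hcontr,
    sum_mul_Hcontr_gradStrain H hmaj hmin fun k => (hu' k).contDiff]
  rw [integral_add hA.integrable.fun_neg hB.integrable,
    integral_add hC.integrable.fun_neg hD.integrable,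
    integral_neg, integral_neg, integral_mul_navier lam mu hu', integral_mul_pd_pd_Hcontr H hu' hν']
  ring

/-- the energy identity for the second order operator `A₋` on smooth compactly
supported fields. -/
theorem energy_identity
    (lam mu : ℝ) (H : Fin 3 → Fin 3 → Fin 3 → Fin 3 → Fin 3 → Fin 3 → ℝ) (hH : Hsym H)
    (u : V → V) (ν : V → Fin 3 → Fin 3 → Fin 3 → ℝ)
    (hu : ContDiff ℝ (⊤ : ℕ∞) u) (hν : ContDiff ℝ (⊤ : ℕ∞) ν)
    (huc : HasCompactSupport u) (hνc : HasCompactSupport ν)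
    (hsym : ∀ x, SymTriadic (ν x)) :
    (∫ x : V, ∑ k : Fin 3, u x k *
        (-(navier lam mu u k x)
          + ∑ i : Fin 3, ∑ j : Fin 3, pd i (pd j (fun y => Hcontr H (ν y) i j k)) x))
    + (∫ x : V, ∑ i : Fin 3, ∑ j : Fin 3, ∑ k : Fin 3, ν x i j k *
        (-(Hcontr H (fun l m n => gradStrain u l m n x) i j k) + Hcontr H (ν x) i j k))
    = (∫ x : V, (2 * mu * ∑ j : Fin 3, ∑ k : Fin 3, (strain u j k x)^2
          + lam * (divg u x)^2))
      + (∫ x : V, ∑ i : Fin 3, ∑ j : Fin 3, ∑ k : Fin 3, ∑ l : Fin 3, ∑ m : Fin 3, ∑ n : Fin 3,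
          ν x i j k * H i j k l m n * ν x l m n) :=
  energy_identity_general lam mu H hH u ν hu hν huc hνc
end
end

section
/- Let μ > 0, λ ≥ 0, let H : (Fin 3)⁶ → ℝ be a sixth-order tensor that is positive with constant α > 0 on symmetric triadics, and let R > 0. Then there exists a constant c > 0 (depending only on μ, α and R) such that for every smooth u : ℝ³ → ℝ³ and every smooth ν̃ : ℝ³ → (Fin 3)³ → ℝ, both supported in the closed ball of radius R centered at the origin, with ν̃(x) a symmetric triadic for every x: ∫_{ℝ³} [2μ Σ_{j,k} e_{jk}(u)² + λ (div u)²] dx + ∫_{ℝ³} Σ ν̃_{ijk} H_{ijklmn} ν̃_{lmn} dx ≥ c ( ∫_{ℝ³} Σ_k u_k² dx + ∫_{ℝ³} Σ_{i,k} (∂_i u_k)² dx + ∫_{ℝ³} Σ_{i,j,k} ν̃_{ijk}² dx ). -/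
open MeasureTheory

noncomputable section

/-!
Integrating by parts twice and commuting partial derivatives gives
`∫ ∑ ∂_j u_k ∂_k u_j = ∫ (div u)²`, hence Korn's identity `2 ∫ |e(u)|² = ∫ |∇u|² + ∫ (div u)²`,
and the elastic energy equals `μ ∫ |∇u|² + (μ + λ) ∫ (div u)² ≥ μ ∫ |∇u|²`.
For `f` supported in the ball of radius `R`, `∫ f² = -∫ x_i ∂_i (f²)` and AM-GM give the
Poincaré inequality `∫ f² ≤ 4R² ∫ (∂_i f)²`, so `∫ |u|² ≤ 4R² ∫ |∇u|²`. Positivity of `H`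
bounds the second integral below by `α ∫ |ν|²`, and `c = min (μ / (4R² + 1)) α` works.
-/

open Metric

theorem integrable_comp_of_hasCompactSupport {X E : Type*} [TopologicalSpace X]
    [MeasurableSpace X] [OpensMeasurableSpace X] {μ : Measure X} [IsFiniteMeasureOnCompacts μ]
    [TopologicalSpace E] [Zero E] {f : X → E} (hf : Continuous f) (hfs : HasCompactSupport f)
    {F : E → ℝ} (hF : Continuous F) (hF0 : F 0 = 0) :
    Integrable (fun x => F (f x)) μ :=
  (hF.comp hf).integrable_of_hasCompactSupport (hfs.comp_left hF0)

theorem integral_finsetSum_finsetSum {X ι κ : Type*} [MeasurableSpace X] {μ : Measure X}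
    (s : Finset ι) (t : Finset κ) {f : ι → κ → X → ℝ} (hf : ∀ i j, Integrable (f i j) μ) :
    ∫ x, ∑ i ∈ s, ∑ j ∈ t, f i j x ∂μ = ∑ i ∈ s, ∑ j ∈ t, ∫ x, f i j x ∂μ := by
  rw [integral_finsetSum _ fun i _ => integrable_finsetSum _ fun j _ => hf i j]
  exact Finset.sum_congr rfl fun i _ => integral_finsetSum _ fun j _ => hf i j

theorem tsupport_apply_subset {X ι : Type*} [TopologicalSpace X] {β : ι → Type*}
    [∀ i, Zero (β i)] (u : X → ∀ i, β i) (i : ι) : tsupport (fun x => u x i) ⊆ tsupport u :=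
  tsupport_comp_subset (g := fun v : ∀ i, β i => v i) rfl u

theorem HasCompactSupport.apply {X ι : Type*} [TopologicalSpace X] {β : ι → Type*}
    [∀ i, Zero (β i)] {u : X → ∀ i, β i} (hu : HasCompactSupport u) (i : ι) :
    HasCompactSupport fun x => u x i :=
  hu.comp_left (g := fun v : ∀ i, β i => v i) rfl

theorem contDiff_pd {n : WithTop ℕ∞} {f : V → ℝ} (hf : ContDiff ℝ (n + 1) f) (i : Fin 3) :
    ContDiff ℝ n (pd i f) :=
  (hf.fderiv_right le_rfl).clm_apply contDiff_const

theorem HasCompactSupport.pd {f : V → ℝ} (hf : HasCompactSupport f) (i : Fin 3) :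
    HasCompactSupport (pd i f) :=
  hf.fderiv_apply ℝ _

theorem pd_pd_comm {f : V → ℝ} (hf : ContDiff ℝ 2 f) (i j : Fin 3) (x : V) :
    pd i (pd j f) x = pd j (pd i f) x := by
  -- the Lie bracket of the constant vector fields `e_j`, `e_i` vanishes
  have h := VectorField.fderiv_apply_lieBracket (hf.contDiffAt (x := x)) (by simp)
    (differentiableAt_const (Pi.single j (1 : ℝ))) (differentiableAt_const (Pi.single i (1 : ℝ)))
  simp only [VectorField.lieBracket, fderiv_fun_const, Pi.zero_apply,
    zero_apply, sub_self, map_zero] at h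
  exact sub_eq_zero.mp h.symm

theorem pd_coord (i : Fin 3) (x : V) : pd i (fun y => y i) x = 1 := by
  simp [pd, (hasFDerivAt_apply i x).fderiv]

theorem pd_sq {f : V → ℝ} (hf : Differentiable ℝ f) (i : Fin 3) (x : V) :
    pd i (fun y => f y ^ 2) x = 2 * f x * pd i f x := by
  simp [pd, ((hf x).hasFDerivAt.pow 2).fderiv]

theorem integral_mul_pd_eq_neg {f g : V → ℝ} (hf : ContDiff ℝ 1 f) (hg : ContDiff ℝ 1 g)
    (hgs : HasCompactSupport g) (i : Fin 3) :
    ∫ x, f x * pd i g x = -∫ x, pd i f x * g x :=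
  have hf' : Continuous (pd i f) := (contDiff_pd (n := 0) hf i).continuous
  have hg' : Continuous (pd i g) := (contDiff_pd (n := 0) hg i).continuous
  integral_mul_fderiv_eq_neg_fderiv_mul_of_integrable
    ((hf'.mul hg.continuous).integrable_of_hasCompactSupport hgs.mul_left)
    ((hf.continuous.mul hg').integrable_of_hasCompactSupport (hgs.pd i).mul_left)
    ((hf.continuous.mul hg.continuous).integrable_of_hasCompactSupport hgs.mul_left)
    (fun x _ => hf.differentiable one_ne_zero x) (fun x _ => hg.differentiable one_ne_zero x)

theorem integral_pd_mul_pd_comm {f g : V → ℝ} (hf : ContDiff ℝ 1 f) (hg : ContDiff ℝ 2 g)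
    (hgs : HasCompactSupport g) (i j : Fin 3) :
    ∫ x, pd i f x * pd j g x = ∫ x, pd j f x * pd i g x := by
  have hi := integral_mul_pd_eq_neg hf (contDiff_pd hg j) (hgs.pd j) i
  have hj := integral_mul_pd_eq_neg hf (contDiff_pd hg i) (hgs.pd i) j
  simp_rw [pd_pd_comm hg i j] at hi
  linarith

theorem integral_sq_le_of_tsupport_subset_closedBall {f : V → ℝ} {R : ℝ} (hf : ContDiff ℝ 1 f)
    (hfR : tsupport f ⊆ closedBall 0 R) (i : Fin 3) :
    ∫ x, f x ^ 2 ≤ 4 * R ^ 2 * ∫ x, pd i f x ^ 2 := by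
  have hfs : HasCompactSupport f :=
    (isCompact_closedBall 0 R).of_isClosed_subset (isClosed_tsupport f) hfR
  have hdf : Continuous (pd i f) := (contDiff_pd (n := 0) hf i).continuous
  have hibp := integral_mul_pd_eq_neg (contDiff_apply ℝ ℝ i) (hf.pow 2)
    (hfs.mono fun x => mt fun hx => by simp [hx]) i
  simp only [pd_coord, one_mul, pd_sq (hf.differentiable one_ne_zero)] at hibp
  -- AM-GM, with `|x i| ≤ R` wherever `f x ≠ 0`
  have hbound (x : V) :
      -(x i * (2 * f x * pd i f x)) ≤ f x ^ 2 / 2 + 2 * R ^ 2 * pd i f x ^ 2 := by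
    by_cases hx : f x = 0
    · rw [hx]
      ring_nf
      positivity
    have hxR : x i ^ 2 ≤ R ^ 2 := by
      have hxB : ‖x‖ ≤ R := mem_closedBall_zero_iff.mp (hfR (subset_tsupport f hx))
      exact sq_le_sq' (by linarith [neg_abs_le (x i), norm_le_pi_norm x i, Real.norm_eq_abs (x i)])
        (by linarith [le_abs_self (x i), norm_le_pi_norm x i, Real.norm_eq_abs (x i)])
    nlinarith [sq_nonneg (f x + 2 * x i * pd i f x),
      mul_le_mul_of_nonneg_right hxR (sq_nonneg (pd i f x))]
  have hlhs : Integrable (fun x : V => -(x i * (2 * f x * pd i f x))) :=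
    (by fun_prop : Continuous _).integrable_of_hasCompactSupport
      (hfs.mono fun x => mt fun hx => by simp [hx])
  have hsq : Integrable (fun x => f x ^ 2) :=
    (hf.continuous.pow 2).integrable_of_hasCompactSupport
      (hfs.mono fun x => mt fun hx => by simp [hx])
  have hdsq : Integrable (fun x => pd i f x ^ 2) :=
    (hdf.pow 2).integrable_of_hasCompactSupport
      ((hfs.pd i).mono fun x => mt fun hx => by simp [hx])
  have hmono := integral_mono hlhs ((hsq.div_const 2).add (hdsq.const_mul (2 * R ^ 2))) hbound
  simp only [Pi.add_apply] at hmono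
  rw [integral_neg, hibp, neg_neg, integral_add (hsq.div_const 2) (hdsq.const_mul _),
    integral_div, integral_const_mul] at hmono
  linarith

-- Every quadratic expression in `∇u` is a continuous function of `vgrad u` vanishing at `0`,
-- which is how its integrability is obtained.
def vgrad (u : V → V) (x : V) : Fin 3 → Fin 3 → ℝ := fun i k => pd i (fun y => u y k) x

theorem ContDiff.continuous_vgrad {u : V → V} (hu : ContDiff ℝ 1 u) : Continuous (vgrad u) :=
  continuous_pi fun i => continuous_pi fun k =>
    (contDiff_pd (n := 0) (contDiff_pi.mp hu k) i).continuous

theorem HasCompactSupport.vgrad {u : V → V} (hu : HasCompactSupport u) :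
    HasCompactSupport (vgrad u) :=
  hu.mono' fun x hx => by
    by_contra hxu
    refine hx (funext fun i => funext fun k => ?_)
    have hxk : x ∉ tsupport (fun y => u y k) := fun h => hxu (tsupport_apply_subset u k h)
    simp [_root_.vgrad, _root_.pd, fderiv_of_notMem_tsupport ℝ hxk]

theorem integrable_comp_vgrad {u : V → V} (hu : ContDiff ℝ 1 u) (hus : HasCompactSupport u)
    {F : (Fin 3 → Fin 3 → ℝ) → ℝ} (hF : Continuous F) (hF0 : F 0 = 0) :
    Integrable fun x => F (vgrad u x) :=
  integrable_comp_of_hasCompactSupport hu.continuous_vgrad hus.vgrad hF hF0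

theorem integral_sum_pd_mul_pd_eq_integral_divg_sq {u : V → V} (hu : ContDiff ℝ 2 u)
    (hus : HasCompactSupport u) :
    ∫ x, ∑ j, ∑ k, pd j (fun y => u y k) x * pd k (fun y => u y j) x = ∫ x, divg u x ^ 2 := by
  have hu1 : ContDiff ℝ 1 u := hu.of_le one_le_two
  have hint (j k : Fin 3) :
      Integrable fun x => pd j (fun y => u y k) x * pd k (fun y => u y j) x :=
    integrable_comp_vgrad hu1 hus (F := fun G => G j k * G k j) (by fun_prop) (by simp)
  have hint' (j k : Fin 3) :
      Integrable fun x => pd k (fun y => u y k) x * pd j (fun y => u y j) x :=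
    integrable_comp_vgrad hu1 hus (F := fun G => G k k * G j j) (by fun_prop) (by simp)
  calc _ = ∑ j, ∑ k, ∫ x, pd j (fun y => u y k) x * pd k (fun y => u y j) x :=
        integral_finsetSum_finsetSum _ _ hint
    _ = ∑ j, ∑ k, ∫ x, pd k (fun y => u y k) x * pd j (fun y => u y j) x := by
        refine Finset.sum_congr rfl fun j _ => Finset.sum_congr rfl fun k _ => ?_
        exact integral_pd_mul_pd_comm ((contDiff_pi.mp hu k).of_le one_le_two)
          (contDiff_pi.mp hu j) (hus.apply j) j k
    _ = ∫ x, ∑ j, ∑ k, pd k (fun y => u y k) x * pd j (fun y => u y j) x :=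
        (integral_finsetSum_finsetSum _ _ hint').symm
    _ = ∫ x, divg u x ^ 2 := by
        simp only [divg, sq, Finset.sum_mul_sum, mul_comm]

theorem two_mul_sum_strain_sq (u : V → V) (x : V) :
    2 * ∑ j, ∑ k, strain u j k x ^ 2 =
      ∑ i, ∑ k, pd i (fun y => u y k) x ^ 2
        + ∑ j, ∑ k, pd j (fun y => u y k) x * pd k (fun y => u y j) x := by
  simp only [strain, Fin.sum_univ_three]
  ring

theorem integral_elastic_energy {u : V → V} (hu : ContDiff ℝ 2 u) (hus : HasCompactSupport u)
    (lam mu : ℝ) :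
    ∫ x, (2 * mu * ∑ j, ∑ k, strain u j k x ^ 2 + lam * divg u x ^ 2) =
      mu * (∫ x, ∑ i, ∑ k, pd i (fun y => u y k) x ^ 2) + (mu + lam) * ∫ x, divg u x ^ 2 := by
  have hint {F : (Fin 3 → Fin 3 → ℝ) → ℝ} (hF : Continuous F) (hF0 : F 0 = 0) :=
    integrable_comp_vgrad (hu.of_le one_le_two) hus hF hF0
  have hgrad : Integrable fun x => ∑ i, ∑ k, pd i (fun y => u y k) x ^ 2 :=
    hint (F := fun G => ∑ i, ∑ k, G i k ^ 2) (by fun_prop) (by simp)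
  have hcross : Integrable fun x =>
      ∑ j, ∑ k, pd j (fun y => u y k) x * pd k (fun y => u y j) x :=
    hint (F := fun G => ∑ j, ∑ k, G j k * G k j) (by fun_prop) (by simp)
  have hdiv : Integrable fun x => divg u x ^ 2 :=
    hint (F := fun G => (∑ j, G j j) ^ 2) (by fun_prop) (by simp)
  calc _ = ∫ x, (mu * ∑ i, ∑ k, pd i (fun y => u y k) x ^ 2
          + mu * ∑ j, ∑ k, pd j (fun y => u y k) x * pd k (fun y => u y j) x
          + lam * divg u x ^ 2) := by
        congr 1 with x
        linear_combination mu * two_mul_sum_strain_sq u x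
    _ = mu * (∫ x, ∑ i, ∑ k, pd i (fun y => u y k) x ^ 2)
          + mu * (∫ x, ∑ j, ∑ k, pd j (fun y => u y k) x * pd k (fun y => u y j) x)
          + lam * ∫ x, divg u x ^ 2 := by
        rw [integral_add ((hgrad.const_mul mu).fun_add (hcross.const_mul mu)) (hdiv.const_mul lam),
          integral_add (hgrad.const_mul mu) (hcross.const_mul mu),
          integral_const_mul, integral_const_mul, integral_const_mul]
    _ = _ := by
        rw [integral_sum_pd_mul_pd_eq_integral_divg_sq hu hus]
        ring

theorem integral_sum_sq_le_of_tsupport_subset_closedBall {u : V → V} {R : ℝ}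
    (hu : ContDiff ℝ 1 u) (huR : tsupport u ⊆ closedBall 0 R) :
    ∫ x, ∑ k, u x k ^ 2 ≤ 4 * R ^ 2 * ∫ x, ∑ i, ∑ k, pd i (fun y => u y k) x ^ 2 := by
  have hus : HasCompactSupport u :=
    (isCompact_closedBall 0 R).of_isClosed_subset (isClosed_tsupport u) huR
  have hint {F : (Fin 3 → Fin 3 → ℝ) → ℝ} (hF : Continuous F) (hF0 : F 0 = 0) :=
    integrable_comp_vgrad hu hus hF hF0
  calc _ = ∑ k, ∫ x, u x k ^ 2 :=
        integral_finsetSum _ fun k _ => integrable_comp_of_hasCompactSupport hu.continuous hus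
          (F := fun v => v k ^ 2) (by fun_prop) (by simp)
    _ ≤ ∑ k, 4 * R ^ 2 * ∫ x, pd 0 (fun y => u y k) x ^ 2 :=
        Finset.sum_le_sum fun k _ => integral_sq_le_of_tsupport_subset_closedBall
          (contDiff_pi.mp hu k) ((tsupport_apply_subset u k).trans huR) 0
    _ = 4 * R ^ 2 * ∫ x, ∑ k, pd 0 (fun y => u y k) x ^ 2 := by
        have hint0 (k : Fin 3) : Integrable fun x => pd 0 (fun y => u y k) x ^ 2 :=
          hint (F := fun G => G 0 k ^ 2) (by fun_prop) (by simp)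
        rw [integral_finsetSum _ fun k _ => hint0 k, Finset.mul_sum]
    _ ≤ 4 * R ^ 2 * ∫ x, ∑ i, ∑ k, pd i (fun y => u y k) x ^ 2 := by
        refine mul_le_mul_of_nonneg_left (integral_mono
          (hint (F := fun G => ∑ k, G 0 k ^ 2) (by fun_prop) (by simp))
          (hint (F := fun G => ∑ i, ∑ k, G i k ^ 2) (by fun_prop) (by simp)) fun x => ?_)
          (by positivity)
        exact Finset.single_le_sum (f := fun i => ∑ k, pd i (fun y => u y k) x ^ 2)
          (fun i _ => by positivity) (Finset.mem_univ 0)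

theorem Hpos.mul_integral_le {X : Type*} [TopologicalSpace X] [MeasurableSpace X]
    [OpensMeasurableSpace X] {μ : Measure X} [IsFiniteMeasureOnCompacts μ]
    {H : Fin 3 → Fin 3 → Fin 3 → Fin 3 → Fin 3 → Fin 3 → ℝ} {α : ℝ} (hH : Hpos H α)
    {ν : X → Fin 3 → Fin 3 → Fin 3 → ℝ} (hν : Continuous ν) (hνs : HasCompactSupport ν)
    (hsym : ∀ x, SymTriadic (ν x)) :
    α * ∫ x, ∑ i, ∑ j, ∑ k, ν x i j k ^ 2 ∂μ ≤
      ∫ x, ∑ i, ∑ j, ∑ k, ∑ l, ∑ m, ∑ n, ν x i j k * H i j k l m n * ν x l m n ∂μ := by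
  rw [← integral_const_mul]
  exact integral_mono
    ((integrable_comp_of_hasCompactSupport hν hνs (F := fun κ => ∑ i, ∑ j, ∑ k, κ i j k ^ 2)
      (by fun_prop) (by simp)).const_mul α)
    (integrable_comp_of_hasCompactSupport hν hνs
      (F := fun κ => ∑ i, ∑ j, ∑ k, ∑ l, ∑ m, ∑ n, κ i j k * H i j k l m n * κ l m n)
      (by fun_prop) (by simp))
    fun x => hH (ν x) (hsym x)

theorem coercivity_of_energy_form_general
    (mu α R : ℝ) (hmu : 0 < mu) (hα : 0 < α) :
    ∃ c : ℝ, 0 < c ∧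
      ∀ lam : ℝ, 0 ≤ lam →
      ∀ H : Fin 3 → Fin 3 → Fin 3 → Fin 3 → Fin 3 → Fin 3 → ℝ, Hpos H α →
      ∀ (u : V → V) (ν : V → Fin 3 → Fin 3 → Fin 3 → ℝ),
        ContDiff ℝ (⊤ : ℕ∞) u → ContDiff ℝ (⊤ : ℕ∞) ν →
        tsupport u ⊆ Metric.closedBall (0 : V) R →
        tsupport ν ⊆ Metric.closedBall (0 : V) R →
        (∀ x, SymTriadic (ν x)) →
        c * ((∫ x : V, ∑ k : Fin 3, (u x k)^2)
            + (∫ x : V, ∑ i : Fin 3, ∑ k : Fin 3, (pd i (fun y => u y k) x)^2)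
            + (∫ x : V, ∑ i : Fin 3, ∑ j : Fin 3, ∑ k : Fin 3, (ν x i j k)^2))
          ≤ (∫ x : V, (2 * mu * ∑ j : Fin 3, ∑ k : Fin 3, (strain u j k x)^2
                + lam * (divg u x)^2))
            + (∫ x : V, ∑ i : Fin 3, ∑ j : Fin 3, ∑ k : Fin 3,
                ∑ l : Fin 3, ∑ m : Fin 3, ∑ n : Fin 3,
                  ν x i j k * H i j k l m n * ν x l m n) := by
  set c₀ := mu / (4 * R ^ 2 + 1)
  refine ⟨min c₀ α, lt_min (by positivity) hα, ?_⟩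
  intro lam hlam H hH u ν hu hν huR hνR hsym
  have hu2 : ContDiff ℝ 2 u := hu.of_le (by norm_cast)
  have hus : HasCompactSupport u :=
    (isCompact_closedBall 0 R).of_isClosed_subset (isClosed_tsupport u) huR
  have hνs : HasCompactSupport ν :=
    (isCompact_closedBall 0 R).of_isClosed_subset (isClosed_tsupport ν) hνR
  rw [integral_elastic_energy hu2 hus]
  have hpoinc := integral_sum_sq_le_of_tsupport_subset_closedBall (hu2.of_le one_le_two) huR
  have hHν := hH.mul_integral_le (μ := volume) hν.continuous hνs hsym
  set A := ∫ x, ∑ k, u x k ^ 2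
  set B := ∫ x, ∑ i, ∑ k, pd i (fun y => u y k) x ^ 2
  set C := ∫ x, ∑ i, ∑ j, ∑ k, ν x i j k ^ 2
  have hB : 0 ≤ B := integral_nonneg fun x => by positivity
  have hC : 0 ≤ C := integral_nonneg fun x => by positivity
  have hD : 0 ≤ ∫ x, divg u x ^ 2 := integral_nonneg fun x => by positivity
  have hAB : min c₀ α * (A + B) ≤ mu * B :=
    calc min c₀ α * (A + B) ≤ c₀ * (A + B) := by gcongr; exact min_le_left _ _
      _ ≤ c₀ * ((4 * R ^ 2 + 1) * B) := by gcongr; linarith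
      _ = mu * B := by rw [← mul_assoc, div_mul_cancel₀ _ (by positivity)]
  have hCα : min c₀ α * C ≤ α * C := by gcongr; exact min_le_right _ _
  linarith [mul_nonneg (by linarith : (0 : ℝ) ≤ mu + lam) hD]

/-- coercivity of the sesquilinear form `Φ` for fields supported in a fixed
ball: the elastic energy plus the `H`-energy dominates the full `H¹ × L²` norm, with a
constant depending only on `μ`, `α` and `R`. -/
theorem coercivity_of_energy_form
    (mu α R : ℝ) (hmu : 0 < mu) (hα : 0 < α) (hR : 0 < R) :
    ∃ c : ℝ, 0 < c ∧
      ∀ lam : ℝ, 0 ≤ lam →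
      ∀ H : Fin 3 → Fin 3 → Fin 3 → Fin 3 → Fin 3 → Fin 3 → ℝ, Hpos H α →
      ∀ (u : V → V) (ν : V → Fin 3 → Fin 3 → Fin 3 → ℝ),
        ContDiff ℝ (⊤ : ℕ∞) u → ContDiff ℝ (⊤ : ℕ∞) ν →
        tsupport u ⊆ Metric.closedBall (0 : V) R →
        tsupport ν ⊆ Metric.closedBall (0 : V) R →
        (∀ x, SymTriadic (ν x)) →
        c * ((∫ x : V, ∑ k : Fin 3, (u x k)^2)
            + (∫ x : V, ∑ i : Fin 3, ∑ k : Fin 3, (pd i (fun y => u y k) x)^2)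
            + (∫ x : V, ∑ i : Fin 3, ∑ j : Fin 3, ∑ k : Fin 3, (ν x i j k)^2))
          ≤ (∫ x : V, (2 * mu * ∑ j : Fin 3, ∑ k : Fin 3, (strain u j k x)^2
                + lam * (divg u x)^2))
            + (∫ x : V, ∑ i : Fin 3, ∑ j : Fin 3, ∑ k : Fin 3,
                ∑ l : Fin 3, ∑ m : Fin 3, ∑ n : Fin 3,
                  ν x i j k * H i j k l m n * ν x l m n) :=
  coercivity_of_energy_form_general mu α R hmu hα
end
end
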